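/- arXiv:2004.01844 — 2 statements merged into one kernel-verified Lean document; each statement's English description precedes it below -/
import Mathlib

section
/- Let R be a noetherian commutative ring and M a finitely generated R-module whose projective dimension is at most 1. Then the zeroth Fitting ideal of M equals the characteristic ideal of M. -/
open Module

section Defs
variable (R : Type*) [CommRing R]

/-- The `r`-th exterior bi-dual `⋂^r_R M := (⋀^r_R (M^*))^*`, realized canonically as the
module of alternating `R`-multilinear forms on `r` copies of the dual module `M^*`. -/
abbrev ExtBidual (M : Type*) [AddCommGroup M] [Module R M] (r : ℕ) :=
  (Module.Dual R M) [⋀^Fin r]→ₗ[R] R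

/-- Functoriality of the exterior bi-dual. -/
noncomputable def extBidualMap {M N : Type*} [AddCommGroup M] [Module R M]
    [AddCommGroup N] [Module R N] (r : ℕ) (f : M →ₗ[R] N) :
    ExtBidual R M r →ₗ[R] ExtBidual R N r where
  toFun φ := φ.compLinearMap f.dualMap
  map_add' := by intros; ext; rfl
  map_smul' := by intros; ext; rfl

/-- The canonical identification `⋂^s_R (R^s) = R`, given by evaluation at the
standard dual basis. -/
noncomputable def extEval (s : ℕ) : ExtBidual R (Fin s → R) s →ₗ[R] R where
  toFun φ := φ (fun i => LinearMap.proj i)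
  map_add' := by intros; rfl
  map_smul' := by intros; rfl

/-- The characteristic ideal of `M` computed from a presentation `0 → N → R^s → M → 0`
with kernel `N`: the image of the induced map `⋂^s_R N → ⋂^s_R R^s = R`. -/
noncomputable def charIdealAux (s : ℕ) (N : Submodule R (Fin s → R)) : Ideal R :=
  LinearMap.range ((extEval R s) ∘ₗ (extBidualMap R s N.subtype))

/-- The zeroth Fitting ideal of `M` computed from a presentation `0 → N → R^s → M → 0`
with kernel `N`: the ideal generated by determinants of `s × s` matrices with columns in `N`. -/
def fittIdealAux (s : ℕ) (N : Submodule R (Fin s → R)) : Ideal R :=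
  Ideal.span { x | ∃ v : Fin s → (Fin s → R), (∀ i, v i ∈ N) ∧ x = (Matrix.of v).det }
end Defs

/-!
A matrix with columns `v i ∈ N` gives the element `det ∘ (evaluation at the v i)` of `⋂^s N`,
whose image in `R` is `det v`, so the Fitting ideal always lies in the characteristic ideal.
Conversely, if `M` has projective dimension at most one then, by Schanuel's lemma, the kernel `N`
of any presentation is projective, and finitely generated because `R` is noetherian. Hence
`N ↪ R^s` factors through a free module `R^n ↠ N`, and every element of `⋂^s N` comes from
`⋂^s R^n`, whose image in `⋂^s R^s = R` lies in the ideal of `s × s` minors of `R^n → R^s`: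
these are determinants of matrices with columns in `N`.
-/

section

variable {R : Type*} [CommRing R]

/-- Schanuel's lemma: lifting `π` and `ρ` through each other makes `ker π` a retract of
`ker ρ × A`. -/
theorem Module.projective_ker_of_projective_ker {A B M : Type*} [AddCommGroup A] [Module R A]
    [AddCommGroup B] [Module R B] [AddCommGroup M] [Module R M]
    [Module.Projective R A] [Module.Projective R B]
    {π : A →ₗ[R] M} {ρ : B →ₗ[R] M} (hπ : Function.Surjective π) (hρ : Function.Surjective ρ)
    [Module.Projective R (LinearMap.ker ρ)] :
    Module.Projective R (LinearMap.ker π) := by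
  obtain ⟨g, hg⟩ := projective_lifting_property ρ π hρ
  obtain ⟨h, hh⟩ := projective_lifting_property π ρ hπ
  have hρg : ∀ a, ρ (g a) = π a := LinearMap.congr_fun hg
  have hπh : ∀ b, π (h b) = ρ b := LinearMap.congr_fun hh
  have hg_ker : ∀ a ∈ LinearMap.ker π, g a ∈ LinearMap.ker ρ := fun a ha => (hρg a).trans ha
  let retraction : LinearMap.ker ρ × A →ₗ[R] LinearMap.ker π :=
    LinearMap.codRestrict _
      ((LinearMap.id - h ∘ₗ g) ∘ₗ LinearMap.snd R _ A +
        h ∘ₗ (LinearMap.ker ρ).subtype ∘ₗ LinearMap.fst R _ A)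
      fun x => by simp [hπh, hρg, LinearMap.mem_ker.mp x.1.2]
  refine .of_split ((g.restrict hg_ker).prod (LinearMap.ker π).subtype) retraction ?_
  refine LinearMap.ext fun y => Subtype.ext ?_
  change (y : A) - h (g y) + h (g y) = y
  exact sub_add_cancel _ _

theorem AlternatingMap.apply_mem_span_det {M I : Type*} [AddCommGroup M] [Module R M]
    [LinearOrder I] (b : Basis I R M) {s : ℕ} (ψ : M [⋀^Fin s]→ₗ[R] R) (v : Fin s → M) :
    ψ v ∈ Ideal.span
      (Set.range fun k : Fin s ↪o I => (Matrix.of fun i j => b.coord (k j) (v i)).det) := by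
  rw [← exteriorPower.alternatingMapLinearEquiv_apply_ιMulti,
    ← (b.exteriorPower s).linearCombination_repr (exteriorPower.ιMulti R s v),
    Finsupp.linearCombination_apply, map_finsuppSum]
  refine Ideal.sum_mem _ fun S _ => ?_
  simp only [map_smul, smul_eq_mul, exteriorPower.basis_repr_apply,
    exteriorPower.ιMultiDual_apply_ιMulti]
  exact Ideal.mul_mem_right _ _ (Ideal.subset_span ⟨_, rfl⟩)

theorem extBidualMap_comp {M N P : Type*} [AddCommGroup M] [Module R M] [AddCommGroup N]
    [Module R N] [AddCommGroup P] [Module R P] (r : ℕ) (f : M →ₗ[R] N) (g : N →ₗ[R] P) :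
    extBidualMap R r (g ∘ₗ f) = extBidualMap R r g ∘ₗ extBidualMap R r f :=
  rfl

theorem extEval_extBidualMap_mem_span_det {n s : ℕ} (f : (Fin n → R) →ₗ[R] Fin s → R)
    (ψ : ExtBidual R (Fin n → R) s) :
    extEval R s (extBidualMap R s f ψ) ∈ Ideal.span
      (Set.range fun k : Fin s ↪o Fin n => (Matrix.of fun j => f (Pi.single (k j) 1)).det) := by
  show ψ (fun i => f.dualMap (LinearMap.proj i)) ∈ _
  convert AlternatingMap.apply_mem_span_det (Pi.basisFun R (Fin n)).dualBasis ψ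
    (fun i => f.dualMap (LinearMap.proj i)) using 4 with k
  rw [← Matrix.det_transpose]
  congr 1
  ext i j
  simp

theorem fittIdealAux_le_charIdealAux (s : ℕ) (N : Submodule R (Fin s → R)) :
    fittIdealAux R s N ≤ charIdealAux R s N := by
  rw [fittIdealAux, Ideal.span_le]
  rintro _ ⟨v, hv, rfl⟩
  let evalAt : Dual R N →ₗ[R] Fin s → R :=
    LinearMap.pi fun i => LinearMap.applyₗ (⟨v i, hv i⟩ : N)
  exact ⟨Matrix.detRowAlternating.compLinearMap evalAt, Matrix.det_transpose _⟩

theorem charIdealAux_le_fittIdealAux {s : ℕ} (N : Submodule R (Fin s → R))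
    [Module.Finite R N] [Module.Projective R N] :
    charIdealAux R s N ≤ fittIdealAux R s N := by
  rintro _ ⟨φ, rfl⟩
  obtain ⟨n, p, g, -, -, hpg⟩ := Module.Finite.exists_comp_eq_id_of_projective R N
  have hfactor : N.subtype = (N.subtype ∘ₗ p) ∘ₗ g := by
    rw [LinearMap.comp_assoc, hpg, LinearMap.comp_id]
  rw [LinearMap.comp_apply, hfactor, extBidualMap_comp, LinearMap.comp_apply]
  refine Ideal.span_le.mpr ?_ (extEval_extBidualMap_mem_span_det _ _)
  rintro _ ⟨k, rfl⟩
  exact Ideal.subset_span ⟨_, fun j => (p _).2, rfl⟩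

end

theorem fitt_eq_char_of_pd_le_one_general (R : Type*) [CommRing R] [IsNoetherianRing R]
    (M : Type*) [AddCommGroup M] [Module R M]
    (hpd : ∃ (t : ℕ) (ρ : (Fin t → R) →ₗ[R] M), Function.Surjective ρ ∧
      Module.Projective R (LinearMap.ker ρ))
    (s : ℕ) (π : (Fin s → R) →ₗ[R] M) (hπ : Function.Surjective π) :
    fittIdealAux R s (LinearMap.ker π) = charIdealAux R s (LinearMap.ker π) := by
  obtain ⟨t, ρ, hρ, hker⟩ := hpd
  have : Module.Projective R (LinearMap.ker π) := Module.projective_ker_of_projective_ker hπ hρ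
  exact le_antisymm (fittIdealAux_le_charIdealAux s _) (charIdealAux_le_fittIdealAux _)

/-- Over a noetherian ring, if a finitely generated module has projective dimension at most `1`
(i.e. it admits a presentation `0 → P → R^t → M → 0` with `P` projective), then its zeroth
Fitting ideal equals its characteristic ideal. -/
theorem fitt_eq_char_of_pd_le_one (R : Type*) [CommRing R] [IsNoetherianRing R]
    (M : Type*) [AddCommGroup M] [Module R M] [Module.Finite R M]
    (hpd : ∃ (t : ℕ) (ρ : (Fin t → R) →ₗ[R] M), Function.Surjective ρ ∧
      Module.Projective R (LinearMap.ker ρ))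
    (s : ℕ) (hs : 0 < s) (π : (Fin s → R) →ₗ[R] M) (hπ : Function.Surjective π) :
    fittIdealAux R s (LinearMap.ker π) = charIdealAux R s (LinearMap.ker π) :=
  fitt_eq_char_of_pd_le_one_general R M hpd s π hπ
end

section
/- Let R be a noetherian commutative ring satisfying conditions (G₀) and (S₂), let M be a finitely generated torsion R-module, and let r ∈ R be a regular element of R that is also M-regular. Then char_R(M) ∩ rR = r·char_R(M). -/
open Module

section Defs2
variable (R : Type*) [CommRing R]

/-- `DepthGE A n` : the local ring `A` has depth at least `n`, i.e. there is a regular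
sequence of length `n` contained in the maximal ideal. -/
def DepthGE (A : Type*) [CommRing A] [IsLocalRing A] (n : ℕ) : Prop :=
  ∃ rs : List A, rs.length = n ∧ (∀ r ∈ rs, r ∈ IsLocalRing.maximalIdeal A) ∧
    RingTheory.Sequence.IsRegular A rs

/-- The height of a prime ideal. -/
noncomputable def primeHt (𝔯 : Ideal R) (h : 𝔯.IsPrime) : ℕ∞ :=
  Order.height (⟨𝔯, h⟩ : PrimeSpectrum R)

/-- Condition (G₀): the localization of `R` at every prime of height `0` is Gorenstein
(for a zero-dimensional local ring, Gorenstein means self-injective). -/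
def CondG0 : Prop :=
  ∀ (𝔯 : Ideal R) (h : 𝔯.IsPrime), primeHt R 𝔯 h ≤ 0 →
    Module.Injective (Localization.AtPrime 𝔯) (Localization.AtPrime 𝔯)

/-- Serre's condition (Sₙ): `depth R_𝔯 ≥ min {n, ht 𝔯}` for every prime `𝔯`. -/
def CondS (n : ℕ) : Prop :=
  ∀ (𝔯 : Ideal R) (h : 𝔯.IsPrime) (m : ℕ),
    (m : ℕ∞) ≤ min (n : ℕ∞) (primeHt R 𝔯 h) → DepthGE (Localization.AtPrime 𝔯) m

/-- The canonical map `I** → R** = R` for an ideal `I ⊆ R`. -/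
noncomputable def bidualToRing (I : Ideal R) :
    Module.Dual R (Module.Dual R I) →ₗ[R] R where
  toFun φ := φ ((Submodule.subtype I).dualMap (LinearMap.id : R →ₗ[R] R))
  map_add' := by intros; rfl
  map_smul' := by intros; rfl
end Defs2

/-!
Let `a` be a regular element killing `M`, so that `N = ker π` contains every `a • eⱼ`. Then
`x ∈ char(M)` iff `a ^ s` divides `x · det (g i (a • eⱼ))` for every `s`-tuple `g` of linear
forms on `N`: the forms `a • g i` are combinations of the coordinate forms with this matrix of
coefficients, and conversely `x · det (g i (a • eⱼ)) / a ^ s` is an alternating form in `g`.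

Given `r * y ∈ char(M)`, it remains to cancel `r` in `a ^ s ∣ r * v`, `v = y · det (…)`. By (S₂),
an associated prime of `R ⧸ (a ^ s)` has height at most one (a regular sequence of length two in
its local ring is incompatible with it being associated), so it is minimal over `(a ^ s)`. If
`a ^ s ∤ v`, such a prime `P` contains `r` and the annihilator of `v` modulo `a ^ s`; localising at
`P` gives `t ∉ P` with `t * r ^ k ∈ (a ^ s)`. As `r` is `M`-regular, `t` kills `M`, and replacing
`a` by `t` in the determinant gives `a ^ s ∣ t ^ s * v`, whence `t ∈ P`, a contradiction.
-/

section PairingMatrix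
variable {R M ι : Type*} [CommRing R] [AddCommGroup M] [Module R M] [Fintype ι]

theorem AlternatingMap.map_sum_smul_eq_det_mul [DecidableEq ι] (φ : M [⋀^ι]→ₗ[R] R)
    (v : ι → M) (C : Matrix ι ι R) :
    φ (fun i => ∑ j, C i j • v j) = C.det * φ v := by
  set ψ := φ.compLinearMap (Fintype.linearCombination R v)
  have hψ : ψ (Pi.basisFun R ι) = φ v := by
    simp [ψ, Fintype.linearCombination_apply_single]
  calc φ (fun i => ∑ j, C i j • v j) = ψ (fun i => C i) := by
        simp [ψ, Fintype.linearCombination_apply]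
    _ = (ψ (Pi.basisFun R ι) • (Pi.basisFun R ι).det) (fun i => C i) := by
        rw [← ψ.eq_smul_basis_det]
    _ = C.det * φ v := by
        rw [AlternatingMap.smul_apply, Pi.basisFun_det_apply, hψ, smul_eq_mul, mul_comm]
        rfl

def dualPairingMatrix (g : ι → Module.Dual R M) (w : ι → M) : Matrix ι ι R :=
  Matrix.of fun i j => g i (w j)

theorem pow_mul_det_dualPairingMatrix [DecidableEq ι] {t a : R} (g : ι → Module.Dual R M)
    {w w' : ι → M} (h : ∀ j, t • w j = a • w' j) :
    t ^ Fintype.card ι * (dualPairingMatrix g w).det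
      = a ^ Fintype.card ι * (dualPairingMatrix g w').det := by
  rw [← Matrix.det_smul, ← Matrix.det_smul]
  congr 1
  ext i j
  simp only [dualPairingMatrix, Matrix.smul_apply, Matrix.of_apply, ← map_smul, h]

end PairingMatrix

section CharIdeal
variable {R : Type*} [CommRing R] {s : ℕ} {N : Submodule R (Fin s → R)} {a x : R}
  {w : Fin s → N}

def Submodule.coordDual (N : Submodule R (Fin s → R)) (i : Fin s) : Module.Dual R N :=
  (LinearMap.proj i).comp N.subtype

theorem mem_charIdealAux_iff_exists :
    x ∈ charIdealAux R s N ↔ ∃ φ : ExtBidual R N s, φ N.coordDual = x :=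
  Iff.rfl

theorem smul_eq_sum_smul_coordDual (hw : ∀ j, (w j : Fin s → R) = a • Pi.single j 1)
    (f : Module.Dual R N) : a • f = ∑ j, f (w j) • N.coordDual j := by
  ext n
  have hn : a • n = ∑ j, (n : Fin s → R) j • w j := by
    ext i
    simp [hw, Pi.single_apply, mul_comm]
  calc a * f n = f (a • n) := (map_smul f a n).symm
    _ = _ := by simp [hn, Submodule.coordDual, mul_comm]

theorem dvd_mul_det_of_mem_charIdealAux (hw : ∀ j, (w j : Fin s → R) = a • Pi.single j 1)
    (hx : x ∈ charIdealAux R s N) (g : Fin s → Module.Dual R N) :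
    a ^ s ∣ x * (dualPairingMatrix g w).det := by
  obtain ⟨φ, rfl⟩ := mem_charIdealAux_iff_exists.mp hx
  refine ⟨φ g, ?_⟩
  have hsmul : φ (fun i => a • g i) = a ^ s * φ g := by
    simpa using φ.toMultilinearMap.map_smul_univ (fun _ => a) g
  have hdet : φ (fun i => a • g i) = (dualPairingMatrix g w).det * φ N.coordDual := by
    simp_rw [smul_eq_sum_smul_coordDual hw]
    exact φ.map_sum_smul_eq_det_mul _ _
  rw [mul_comm]
  exact hdet.symm.trans hsmul

theorem dualPairingMatrix_coordDual (hw : ∀ j, (w j : Fin s → R) = a • Pi.single j 1) :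
    dualPairingMatrix N.coordDual w = Matrix.diagonal fun _ => a := by
  ext i j
  simp [dualPairingMatrix, Submodule.coordDual, hw, Matrix.diagonal_apply, Pi.single_apply]

theorem mem_charIdealAux_of_forall_dvd (ha : a ∈ nonZeroDivisors R)
    (hw : ∀ j, (w j : Fin s → R) = a • Pi.single j 1)
    (hx : ∀ g : Fin s → Module.Dual R N, a ^ s ∣ x * (dualPairingMatrix g w).det) :
    x ∈ charIdealAux R s N := by
  let mul : R →ₗ[R] R := LinearMap.mulLeft R (a ^ s)
  have hmul : Function.Injective mul := fun _ _ h =>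
    (mul_cancel_left_mem_nonZeroDivisors (pow_mem ha s)).mp h
  let ψ : Module.Dual R N [⋀^Fin s]→ₗ[R] R :=
    x • Matrix.detRowAlternating.compLinearMap (LinearMap.pi fun j => Module.Dual.eval R N (w j))
  have hψ : ∀ g, ψ g = x * (dualPairingMatrix g w).det := fun _ => rfl
  let φ : ExtBidual R N s := (LinearEquiv.ofInjective mul hmul).symm.toLinearMap.compAlternatingMap
    (ψ.codRestrict (LinearMap.range mul) fun g => by
      obtain ⟨c, hc⟩ := hx g
      exact ⟨c, by rw [hψ, hc]; rfl⟩)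
  refine mem_charIdealAux_iff_exists.mpr ⟨φ, hmul ?_⟩
  have hφ : mul (φ N.coordDual) = ψ N.coordDual := LinearEquiv.ofInjective_symm_apply _ _
  rw [hφ, hψ, dualPairingMatrix_coordDual hw, Matrix.det_diagonal, Finset.prod_const,
    Finset.card_univ, Fintype.card_fin]
  exact mul_comm _ _

theorem mem_charIdealAux_iff_forall_dvd (ha : a ∈ nonZeroDivisors R)
    (hw : ∀ j, (w j : Fin s → R) = a • Pi.single j 1) :
    x ∈ charIdealAux R s N ↔
      ∀ g : Fin s → Module.Dual R N, a ^ s ∣ x * (dualPairingMatrix g w).det :=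
  ⟨dvd_mul_det_of_mem_charIdealAux hw, mem_charIdealAux_of_forall_dvd ha hw⟩

end CharIdeal

section Depth
variable {R : Type*} [CommRing R]
open RingTheory.Sequence IsLocalization Pointwise

theorem dvd_of_isWeaklyRegular_pair {A : Type*} [CommRing A] {u v x y : A}
    (hu : u ∈ nonZeroDivisors A) (hxy : IsWeaklyRegular A [x, y])
    (hx : u ∣ x * v) (hy : u ∣ y * v) : u ∣ v := by
  rw [isWeaklyRegular_cons_iff, isWeaklyRegular_cons_iff] at hxy
  obtain ⟨hxreg, hyreg, -⟩ := hxy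
  obtain ⟨c, hc⟩ := hx
  obtain ⟨d, hd⟩ := hy
  have hyc : y * c = x * d := (mul_cancel_left_mem_nonZeroDivisors hu).mp <| by
    linear_combination x * hd - y * hc
  have hc_mem : c ∈ (x • ⊤ : Submodule A A) := by
    rw [← Submodule.Quotient.mk_eq_zero]
    refine hyreg.right_eq_zero_of_smul ?_
    rw [← Submodule.Quotient.mk_smul, Submodule.Quotient.mk_eq_zero, smul_eq_mul, hyc]
    exact Submodule.smul_mem_pointwise_smul d x ⊤ trivial
  obtain ⟨e, -, rfl⟩ := (Submodule.mem_smul_pointwise_iff_exists _ _ _).mp hc_mem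
  refine ⟨e, hxreg ?_⟩
  simp only [smul_eq_mul] at hc ⊢
  linear_combination hc

theorem not_depthGE_two_of_forall_mem_iff_dvd {P : Ideal R} [P.IsPrime] {u v : R}
    (hu : u ∈ nonZeroDivisors R) (hP : ∀ p, p ∈ P ↔ u ∣ p * v) :
    ¬ DepthGE (Localization.AtPrime P) 2 := by
  rintro ⟨rs, hlen, hmem, hreg⟩
  obtain ⟨x, y, rfl⟩ := List.length_eq_two.mp hlen
  let f := algebraMap R (Localization.AtPrime P)
  have hdvd : ∀ z ∈ IsLocalRing.maximalIdeal (Localization.AtPrime P), f u ∣ z * f v := by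
    intro z hz
    obtain ⟨⟨p, t⟩, rfl⟩ := mk'_surjective P.primeCompl z
    obtain ⟨c, hc⟩ := (hP p).mp ((AtPrime.mk'_mem_maximal_iff _ P p t).mp hz)
    refine ⟨mk' _ c t, ?_⟩
    rw [mul_comm, mul_mk'_eq_mk'_of_mul, mul_mk'_eq_mk'_of_mul, mul_comm, hc]
  have hndvd : ¬ f u ∣ f v := by
    intro h
    have hmem : f v ∈ (Ideal.span {u}).map f := by
      rwa [Ideal.map_span, Set.image_singleton, Ideal.mem_span_singleton]
    obtain ⟨m, hm⟩ := (algebraMap_mem_map_algebraMap_iff P.primeCompl _ _ _).mp hmem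
    exact hm.1 ((hP m).mpr (Ideal.mem_span_singleton.mp hm.2))
  exact hndvd <| dvd_of_isWeaklyRegular_pair (nonZeroDivisors_le_comap P.primeCompl _ hu)
    hreg.toIsWeaklyRegular (hdvd x (hmem x (by simp))) (hdvd y (hmem y (by simp)))

end Depth

section Unmixed
variable {R : Type*} [CommRing R]

theorem mem_colon_mk_span_singleton_iff {u v t : R} :
    t ∈ (⊥ : Submodule R (R ⧸ Ideal.span {u})).colon {Ideal.Quotient.mk _ v} ↔ u ∣ t * v := by
  rw [Submodule.mem_colon_singleton, Submodule.mem_bot, Algebra.smul_def,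
    Ideal.Quotient.algebraMap_eq, ← map_mul, Ideal.Quotient.eq_zero_iff_mem,
    Ideal.mem_span_singleton]

theorem exists_notMem_mul_pow_mem_of_mem_minimalPrimes {I P : Ideal R}
    (hP : P ∈ I.minimalPrimes) {r : R} (hr : r ∈ P) : ∃ t ∉ P, ∃ k, t * r ^ k ∈ I := by
  have := hP.isPrime
  have hrad := IsLocalization.AtPrime.radical_map_of_mem_minimalPrimes
    (A := Localization.AtPrime P) P I hP
  obtain ⟨k, hk⟩ : algebraMap R _ r ∈ (I.map (algebraMap R (Localization.AtPrime P))).radical :=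
    hrad ▸ Ideal.mem_map_of_mem _ hr
  rw [← map_pow] at hk
  obtain ⟨t, ht, htI⟩ := (IsLocalization.algebraMap_mem_map_algebraMap_iff P.primeCompl _ _ _).mp hk
  exact ⟨t, ht, k, htI⟩

theorem exists_mem_minimalPrimes_span_of_not_dvd [IsNoetherianRing R] (hS : CondS R 2)
    {u v : R} (hu : u ∈ nonZeroDivisors R) (hv : ¬ u ∣ v) :
    ∃ P ∈ (Ideal.span {u}).minimalPrimes, ∀ t, u ∣ t * v → t ∈ P := by
  have hv0 : Ideal.Quotient.mk (Ideal.span {u}) v ≠ 0 := by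
    rwa [Ne, Ideal.Quotient.eq_zero_iff_mem, Ideal.mem_span_singleton]
  obtain ⟨P, hPass, hle⟩ := exists_le_isAssociatedPrime_of_isNoetherianRing R _ hv0
  obtain ⟨hP, z, hz⟩ := isAssociatedPrime_iff.mp hPass
  obtain ⟨w, rfl⟩ := Ideal.Quotient.mk_surjective z
  have hPw : ∀ p, p ∈ P ↔ u ∣ p * w := fun p => by rw [hz, mem_colon_mk_span_singleton_iff]
  refine ⟨P, ?_, fun t ht => hle (mem_colon_mk_span_singleton_iff.mpr ht)⟩
  have hht : P.height ≤ 1 := by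
    by_contra! h
    refine not_depthGE_two_of_forall_mem_iff_dvd hu hPw (hS P hP 2 (le_min le_rfl ?_))
    rw [primeHt, ← PrimeSpectrum.height_eq_orderHeight]
    exact Order.add_one_le_of_lt h
  exact Ideal.mem_minimalPrimes_of_height_le
    ((Ideal.span_singleton_le_iff_mem _).mpr ((hPw u).mpr (dvd_mul_right u w)))
    (hht.trans (Ideal.one_le_height_span_singleton_of_mem_nonZeroDivisors hu))

end Unmixed

theorem Submodule.mem_of_pow_smul_mem {R M : Type*} [CommRing R] [AddCommGroup M] [Module R M]
    {N : Submodule R M} {r : R} (hN : ∀ v, r • v ∈ N → v ∈ N) (k : ℕ) {v : M}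
    (h : r ^ k • v ∈ N) : v ∈ N := by
  induction k generalizing v with
  | zero => simpa using h
  | succ k ih => exact hN v (ih (by rwa [smul_smul, ← pow_succ]))

section CharIdealInf
variable {R : Type*} [CommRing R] [IsNoetherianRing R] {s : ℕ} {N : Submodule R (Fin s → R)}
  {a r : R}

theorem mem_charIdealAux_of_mul_mem (hS : CondS R 2) (ha : a ∈ nonZeroDivisors R)
    (haN : ∀ j, a • Pi.single j 1 ∈ N) (hN : ∀ v, r • v ∈ N → v ∈ N) {y : R}
    (hy : r * y ∈ charIdealAux R s N) : y ∈ charIdealAux R s N := by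
  let w : Fin s → N := fun j => ⟨_, haN j⟩
  have hw : ∀ j, (w j : Fin s → R) = a • Pi.single j 1 := fun _ => rfl
  rw [mem_charIdealAux_iff_forall_dvd ha hw] at hy ⊢
  intro g
  by_contra hdvd
  obtain ⟨P, hP, hann⟩ := exists_mem_minimalPrimes_span_of_not_dvd hS (pow_mem ha s) hdvd
  obtain ⟨t, htP, k, htk⟩ := exists_notMem_mul_pow_mem_of_mem_minimalPrimes hP
    (hann r (by simpa only [mul_assoc] using hy g))
  obtain ⟨c, hc⟩ := Ideal.mem_span_singleton.mp htk
  have htN : ∀ j, t • Pi.single j 1 ∈ N := fun j => by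
    refine Submodule.mem_of_pow_smul_mem hN k ?_
    have hfactor : r ^ k * t = (c * a ^ (s - 1)) * a := by
      rw [mul_comm, hc, ← pow_sub_one_mul j.pos.ne']
      ring
    rw [smul_smul, hfactor, mul_smul]
    exact N.smul_mem _ (haN j)
  let wt : Fin s → N := fun j => ⟨_, htN j⟩
  have hdet := pow_mul_det_dualPairingMatrix g (w := w) (w' := wt)
    fun j => Subtype.ext (smul_comm t a (Pi.single j 1))
  rw [Fintype.card_fin] at hdet
  refine htP (hP.isPrime.mem_of_pow_mem s (hann _ ⟨y * (dualPairingMatrix g wt).det, ?_⟩))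
  linear_combination y * hdet

theorem charIdealAux_inf_span_singleton (hS : CondS R 2) (ha : a ∈ nonZeroDivisors R)
    (haN : ∀ j, a • Pi.single j 1 ∈ N) (hN : ∀ v, r • v ∈ N → v ∈ N) :
    charIdealAux R s N ⊓ Ideal.span {r} = Ideal.span {r} * charIdealAux R s N := by
  refine le_antisymm (fun x hx => ?_) (inf_comm (Ideal.span {r}) _ ▸ Ideal.mul_le_inf)
  obtain ⟨hxI, hxr⟩ := Submodule.mem_inf.mp hx
  obtain ⟨y, rfl⟩ := Ideal.mem_span_singleton.mp hxr
  exact Ideal.mem_span_singleton_mul.mpr ⟨y, mem_charIdealAux_of_mul_mem hS ha haN hN hxI, rfl⟩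

end CharIdealInf

theorem char_inter_principal_general (R : Type*) [CommRing R] [IsNoetherianRing R]
    (hS : CondS R 2)
    (M : Type*) [AddCommGroup M] [Module R M]
    (htors : ∃ a ∈ nonZeroDivisors R, ∀ m : M, a • m = 0)
    (r : R)
    (hreg : Function.Injective (fun m : M => r • m))
    (s : ℕ) (π : (Fin s → R) →ₗ[R] M) :
    charIdealAux R s (LinearMap.ker π) ⊓ Ideal.span {r}
      = Ideal.span {r} * charIdealAux R s (LinearMap.ker π) := by
  obtain ⟨a, ha, haM⟩ := htors
  refine charIdealAux_inf_span_singleton hS ha (fun j => ?_) (fun v hv => ?_)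
  · rw [LinearMap.mem_ker, map_smul, haM]
  · rw [LinearMap.mem_ker, map_smul] at hv
    exact hreg (hv.trans (smul_zero r).symm)

/-- If a noetherian ring satisfies (G₀) and (S₂), `M` is a finitely generated torsion module
and `r` is a regular element of `R` which is `M`-regular, then
`char_R(M) ∩ rR = r·char_R(M)`. -/
theorem char_inter_principal (R : Type*) [CommRing R] [IsNoetherianRing R]
    (hG : CondG0 R) (hS : CondS R 2)
    (M : Type*) [AddCommGroup M] [Module R M] [Module.Finite R M]
    (htors : ∃ a ∈ nonZeroDivisors R, ∀ m : M, a • m = 0)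
    (r : R) (hr : r ∈ nonZeroDivisors R)
    (hreg : Function.Injective (fun m : M => r • m))
    (s : ℕ) (hs : 0 < s) (π : (Fin s → R) →ₗ[R] M) (hπ : Function.Surjective π) :
    charIdealAux R s (LinearMap.ker π) ⊓ Ideal.span {r}
      = Ideal.span {r} * charIdealAux R s (LinearMap.ker π) :=
  char_inter_principal_general R hS M htors r hreg s π
end
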